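/- Let $A$ be the free associative $\mathbb{F}_2$-algebra on generators $z_1, z_2, z_3, \ldots$ (one generator for each positive integer). An element $a \in A$ satisfies $a z_1 = z_1 a$ if and only if $a$ lies in the $\mathbb{F}_2$-subalgebra of $A$ generated by $z_1$. In other words, the centralizer of the generator $z_1$ in $A$ consists exactly of the polynomials in $z_1$ with $\mathbb{F}_2$-coefficients. -/

import Mathlib

/-!
Identify the free algebra with the monoid algebra of the free monoid. If `f` commutes with the
generator `x`, comparing the coefficients of `f x` and `x f` shows that the coefficients of `f`
are invariant under moving a leading `x` of a word to its end, and vanish on words whose first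
letter is not `x`. A word that is not a power of `x` has the form `xᵏ y u` with `y ≠ x`; moving
its `k` leading `x`s to the end gives `y u xᵏ`, so `f` has no coefficient there. Hence `f` is
a polynomial in `x`.
-/

namespace List

variable {α : Type*}

theorem eq_replicate_or_eq_replicate_append_cons_of_ne (x : α) (l : List α) :
    (∃ n, l = replicate n x) ∨ ∃ k y u, y ≠ x ∧ l = replicate k x ++ y :: u := by
  induction l with
  | nil => exact .inl ⟨0, rfl⟩
  | cons a l ih =>
    by_cases ha : a = x
    · subst ha
      rcases ih with ⟨n, rfl⟩ | ⟨k, y, u, hy, rfl⟩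
      · exact .inl ⟨n + 1, rfl⟩
      · exact .inr ⟨k + 1, y, u, hy, rfl⟩
    · exact .inr ⟨0, a, l, ha, rfl⟩

theorem eq_zero_of_forall_cons_eq_concat {M : Type*} [Zero M] {c : List α → M} {x : α}
    (hrot : ∀ l, c (x :: l) = c (l ++ [x])) (hzero : ∀ y l, y ≠ x → c (y :: l) = 0)
    {l : List α} (hl : ∀ n, l ≠ replicate n x) : c l = 0 := by
  obtain ⟨n, rfl⟩ | ⟨k, y, u, hy, rfl⟩ := eq_replicate_or_eq_replicate_append_cons_of_ne x l
  · exact absurd rfl (hl n)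
  clear hl
  induction k generalizing u with
  | zero => exact hzero y u hy
  | succ k ih =>
    rw [replicate_succ, cons_append, hrot, append_assoc, cons_append]
    exact ih _

end List

theorem FreeMonoid.toList_of_pow {α : Type*} (x : α) (n : ℕ) :
    (of x ^ n).toList = List.replicate n x := by
  induction n with
  | zero => rfl
  | succ n ih => rw [pow_succ, toList_mul, ih, List.replicate_succ', toList_of]

namespace MonoidAlgebra

variable {R X : Type*}

section Semiring

variable [Semiring R] {f : R[FreeMonoid X]} {x : X}

/-- Both sides are the coefficient of `f * x` and of `x * f` at `x l x`. -/
theorem coeff_cons_eq_coeff_concat_of_commute (hf : Commute f (of R _ (FreeMonoid.of x)))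
    (l : List X) : f.coeff (.ofList (x :: l)) = f.coeff (.ofList (l ++ [x])) := by
  have h := congr(($hf.eq).coeff (FreeMonoid.of x * FreeMonoid.ofList l * FreeMonoid.of x))
  rwa [of_apply, coeff_mul_single_mul, mul_assoc, coeff_single_mul_mul, mul_one, one_mul] at h

theorem coeff_cons_eq_zero_of_commute (hf : Commute f (of R _ (FreeMonoid.of x))) {y : X}
    (hy : y ≠ x) (l : List X) : f.coeff (.ofList (y :: l)) = 0 := by
  have h := congr(($hf.eq).coeff (FreeMonoid.ofList (y :: l) * FreeMonoid.of x))
  rwa [of_apply, coeff_mul_single_mul, mul_one, coeff_single_mul_of_forall_mul_ne] at h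
  intro d hd
  exact hy (List.head_eq_of_cons_eq congr(FreeMonoid.toList $hd)).symm

theorem coeff_eq_zero_of_commute (hf : Commute f (of R _ (FreeMonoid.of x)))
    {w : FreeMonoid X} (hw : ∀ n, w ≠ FreeMonoid.of x ^ n) : f.coeff w = 0 :=
  List.eq_zero_of_forall_cons_eq_concat (c := fun l ↦ f.coeff (.ofList l))
    (coeff_cons_eq_coeff_concat_of_commute hf)
    (fun _ _ hy ↦ coeff_cons_eq_zero_of_commute hf hy _) (l := w.toList)
    fun n h ↦ hw n (FreeMonoid.toList.injective (by rw [h, FreeMonoid.toList_of_pow]))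

end Semiring

theorem centralizer_of_freeMonoid_of [CommSemiring R] (x : X) :
    Subalgebra.centralizer R {of R _ (FreeMonoid.of x)} =
      Algebra.adjoin R {of R _ (FreeMonoid.of x)} := by
  refine le_antisymm (fun f hf ↦ ?_) <|
    Algebra.adjoin_le (Set.singleton_subset_iff.2 ((Subalgebra.mem_centralizer_iff R).2 (by simp)))
  have hf : Commute f (of R _ (FreeMonoid.of x)) :=
    ((Subalgebra.mem_centralizer_iff R).1 hf _ rfl).symm
  refine Algebra.adjoin_le ?_ (mem_adjoin_support f)
  rintro _ ⟨w, hw, rfl⟩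
  obtain ⟨n, rfl⟩ : ∃ n, w = FreeMonoid.of x ^ n := by
    by_contra! h
    exact Finsupp.mem_support_iff.1 hw (coeff_eq_zero_of_commute hf h)
  rw [map_pow]
  exact pow_mem (Algebra.self_mem_adjoin_singleton R _) n

end MonoidAlgebra

namespace FreeAlgebra

variable {R X : Type*} [CommSemiring R]

theorem equivMonoidAlgebraFreeMonoid_ι (x : X) :
    equivMonoidAlgebraFreeMonoid (ι R x) = MonoidAlgebra.of R _ (FreeMonoid.of x) := by
  simp [equivMonoidAlgebraFreeMonoid]

theorem centralizer_ι (x : X) :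
    Subalgebra.centralizer R {ι R x} = Algebra.adjoin R {ι R x} := by
  let e : FreeAlgebra R X ≃ₐ[R] _ := equivMonoidAlgebraFreeMonoid
  ext a
  have h := SetLike.ext_iff.1 (MonoidAlgebra.centralizer_of_freeMonoid_of (R := R) x) (e a)
  rw [← equivMonoidAlgebraFreeMonoid_ι, ← e.toAlgHom_apply, ← AlgHom.map_adjoin_singleton,
    Subalgebra.mem_map] at h
  simp only [Subalgebra.mem_centralizer_iff, Set.mem_singleton_iff, forall_eq] at h ⊢
  simpa only [AlgEquiv.coe_toAlgHom, ← map_mul, e.injective.eq_iff, exists_eq_right] using h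

end FreeAlgebra

/-- **Centralizer of a generator in a free associative algebra.**
Let `A` be the free associative `𝔽₂`-algebra on generators `z₁, z₂, z₃, …`
(indexed by the positive natural numbers).  An element `a` commutes with the
generator `z₁` if and only if `a` lies in the `𝔽₂`-subalgebra of `A` generated
by `z₁`, i.e. the centralizer of `z₁` consists exactly of polynomials in `z₁`. -/
theorem centralizer_of_generator_in_free_algebra
    (a : FreeAlgebra (ZMod 2) ℕ+) :
    a * FreeAlgebra.ι (ZMod 2) (1 : ℕ+) = FreeAlgebra.ι (ZMod 2) (1 : ℕ+) * a ↔
      a ∈ Algebra.adjoin (ZMod 2)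
        ({FreeAlgebra.ι (ZMod 2) (1 : ℕ+)} : Set (FreeAlgebra (ZMod 2) ℕ+)) := by
  simp only [← FreeAlgebra.centralizer_ι, Subalgebra.mem_centralizer_iff, Set.mem_singleton_iff,
    forall_eq, eq_comm]
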